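/- Let n ≥ 2 and let I ⊆ R be an m-primary ideal whose Hilbert function is h_{R/I} = (1, n, 2) (i.e. h_{R/I}(0)=1, h_{R/I}(1)=n, h_{R/I}(2)=2, and h_{R/I}(k)=0 for k ≥ 3). Then m³ ⊆ I ⊆ m² and I = W + m³, where W = I ∩ R_2 is a ℂ-subspace of R_2 of codimension 2; in particular I is a homogeneous ideal. -/

import Mathlib

/-!
Write `J_k = m^k + I`. Sending a form of degree `k` to its class is a surjection
`R_k → J_k / J_{k+1}` with kernel `R_k ∩ J_{k+1}`, so `h(k) + dim (R_k ∩ J_{k+1}) = dim R_k`.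
As `m^k` is generated by `R_k`, `h(k) = 0` gives `m^k ⊆ J_{k+1}`, and descending from `m^N ⊆ I`
yields `m³ ⊆ I`. Since `h(0) = dim R_0` and `h(1) = dim R_1`, no element of `I` has its
lowest-degree part in degree `0` or `1`, so `I ⊆ m²`. Squeezed between `m³` and `m²`, `I`
contains the quadratic part of each of its elements, which gives homogeneity and `I = W + m³`;
finally `J_3 = I` turns the identity at `k = 2` into `dim W + 2 = dim R_2`.
-/

open MvPolynomial

noncomputable section

/-- `R n = ℂ[x_1, …, x_n]`. -/
abbrev R (n : ℕ) : Type := MvPolynomial (Fin n) ℂ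

/-- `m = (x_1, …, x_n)`, the ideal generated by the variables. -/
def mId (n : ℕ) : Ideal (R n) := Ideal.span (Set.range MvPolynomial.X)

/-- `R_d`, the ℂ-subspace of homogeneous polynomials of degree `d`. -/
def Rdeg (n d : ℕ) : Submodule ℂ (R n) := homogeneousSubmodule (Fin n) ℂ d

/-- The Hilbert function `h_{R/I}(k) = dim_ℂ (m^k + I)/(m^{k+1} + I)`. -/
def hilbFn (n : ℕ) (I : Ideal (R n)) (k : ℕ) : ℕ :=
  Module.finrank ℂ
    (↥((mId n ^ k ⊔ I).restrictScalars ℂ) ⧸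
      (Submodule.comap ((mId n ^ k ⊔ I).restrictScalars ℂ).subtype
        ((mId n ^ (k + 1) ⊔ I).restrictScalars ℂ)))

namespace MvPolynomial

section CommRing

variable {σ A : Type*} [CommRing A] {k d : ℕ} {φ : MvPolynomial σ A}

theorem IsHomogeneous.mem_pow_idealOfVars (hφ : φ.IsHomogeneous d) (hk : k ≤ d) :
    φ ∈ idealOfVars σ A ^ k := by
  refine (mem_pow_idealOfVars_iff k φ).2 fun s hs => ?_
  rw [Finsupp.degree_eq_weight_one]
  exact hk.trans_eq (hφ (mem_support_iff.1 hs)).symm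

theorem homogeneousComponent_eq_zero_of_mem_pow_idealOfVars (hφ : φ ∈ idealOfVars σ A ^ k)
    (hd : d < k) : homogeneousComponent d φ = 0 :=
  homogeneousComponent_eq_zero' d φ fun s hs =>
    (((mem_pow_idealOfVars_iff k φ).1 hφ s hs).trans_lt' hd).ne'

theorem sub_homogeneousComponent_mem_pow_idealOfVars_succ (hφ : φ ∈ idealOfVars σ A ^ k) :
    φ - homogeneousComponent k φ ∈ idealOfVars σ A ^ (k + 1) := by
  classical
  refine (mem_pow_idealOfVars_iff' _ _).2 fun s hs => ?_
  rw [coeff_sub, coeff_homogeneousComponent]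
  rcases (Nat.lt_succ_iff.1 hs).lt_or_eq with hlt | rfl
  · rw [if_neg hlt.ne, (mem_pow_idealOfVars_iff' k φ).1 hφ s hlt, sub_zero]
  · rw [if_pos rfl, sub_self]

theorem pow_idealOfVars_le_of_homogeneousSubmodule_le {J : Ideal (MvPolynomial σ A)}
    (h : homogeneousSubmodule σ A k ≤ J.restrictScalars A) : idealOfVars σ A ^ k ≤ J := by
  rw [pow_idealOfVars_eq_span, Ideal.span_le]
  rintro _ ⟨s, hs, rfl⟩
  exact h (isHomogeneous_monomial 1 hs)

variable {I : Ideal (MvPolynomial σ A)}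

theorem le_pow_idealOfVars_succ_of_inf_eq_bot (hI : I ≤ idealOfVars σ A ^ k)
    (h : (idealOfVars σ A ^ (k + 1) ⊔ I).restrictScalars A ⊓ homogeneousSubmodule σ A k = ⊥) :
    I ≤ idealOfVars σ A ^ (k + 1) := by
  intro f hf
  have hsub := sub_homogeneousComponent_mem_pow_idealOfVars_succ (hI hf)
  have hcomp : homogeneousComponent k f ∈
      (idealOfVars σ A ^ (k + 1) ⊔ I).restrictScalars A ⊓ homogeneousSubmodule σ A k := by
    refine ⟨?_, homogeneousComponent_mem k f⟩
    have := sub_mem (Ideal.mem_sup_right hf) (Ideal.mem_sup_left hsub)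
    rwa [sub_sub_cancel] at this
  rw [h, Submodule.mem_bot] at hcomp
  simpa [hcomp] using hsub

theorem homogeneousComponent_mem_of_le_pow_of_pow_succ_le (hI : I ≤ idealOfVars σ A ^ k)
    (hI' : idealOfVars σ A ^ (k + 1) ≤ I) {f : MvPolynomial σ A} (hf : f ∈ I) (d : ℕ) :
    homogeneousComponent d f ∈ I := by
  rcases lt_trichotomy d k with hd | rfl | hd
  · rw [homogeneousComponent_eq_zero_of_mem_pow_idealOfVars (hI hf) hd]
    exact I.zero_mem
  · simpa using I.sub_mem hf (hI' (sub_homogeneousComponent_mem_pow_idealOfVars_succ (hI hf)))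
  · exact hI' ((homogeneousComponent_isHomogeneous d f).mem_pow_idealOfVars hd)

theorem eq_span_inf_homogeneousSubmodule_sup_of_le_pow_of_pow_succ_le
    (hI : I ≤ idealOfVars σ A ^ k) (hI' : idealOfVars σ A ^ (k + 1) ≤ I) :
    I = Ideal.span ((I.restrictScalars A ⊓ homogeneousSubmodule σ A k : Submodule A _) : Set _)
      ⊔ idealOfVars σ A ^ (k + 1) := by
  refine le_antisymm (fun f hf => ?_) (sup_le (Ideal.span_le.2 fun _ hx => hx.1) hI')
  rw [← add_sub_cancel (homogeneousComponent k f) f]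
  refine Ideal.add_mem _ (Ideal.mem_sup_left (Ideal.subset_span ⟨?_, homogeneousComponent_mem k f⟩))
    (Ideal.mem_sup_right (sub_homogeneousComponent_mem_pow_idealOfVars_succ (hI hf)))
  exact homogeneousComponent_mem_of_le_pow_of_pow_succ_le hI hI' hf k

end CommRing

variable {σ K : Type*} [Field K]

theorem finrank_homogeneousSubmodule_zero : Module.finrank K (homogeneousSubmodule σ K 0) = 1 := by
  rw [homogeneousSubmodule_zero, Submodule.one_eq_span, finrank_span_singleton one_ne_zero]

theorem finrank_homogeneousSubmodule_one [Fintype σ] :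
    Module.finrank K (homogeneousSubmodule σ K 1) = Fintype.card σ := by
  rw [homogeneousSubmodule_one_eq_span_X, finrank_span_eq_card (linearIndependent_X σ K)]

end MvPolynomial

section HilbertFunction

instance (n k : ℕ) : Module.Finite ℂ (Rdeg n k) :=
  Module.Finite.iff_fg.2 (homogeneousSubmodule_fg _ _ k)

variable {n : ℕ} (I : Ideal (R n)) (k : ℕ)

def toHilbQuotient : Rdeg n k →ₗ[ℂ]
    ↥((mId n ^ k ⊔ I).restrictScalars ℂ) ⧸
      Submodule.comap ((mId n ^ k ⊔ I).restrictScalars ℂ).subtype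
        ((mId n ^ (k + 1) ⊔ I).restrictScalars ℂ) :=
  Submodule.mkQ _ ∘ₗ Submodule.inclusion fun _ hφ =>
    Ideal.mem_sup_left (IsHomogeneous.mem_pow_idealOfVars hφ le_rfl)

theorem toHilbQuotient_surjective : Function.Surjective (toHilbQuotient I k) := by
  rintro ⟨g, hg⟩
  obtain ⟨a, ha, b, hb, rfl⟩ := Submodule.mem_sup.1 hg
  refine ⟨⟨homogeneousComponent k a, homogeneousComponent_mem k a⟩, (Submodule.Quotient.eq _).2 ?_⟩
  have hdiff : homogeneousComponent k a - (a + b) = -(a - homogeneousComponent k a) - b := by ring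
  show homogeneousComponent k a - (a + b) ∈ mId n ^ (k + 1) ⊔ I
  rw [hdiff]
  exact sub_mem (Ideal.mem_sup_left (neg_mem (sub_homogeneousComponent_mem_pow_idealOfVars_succ ha)))
    (Ideal.mem_sup_right hb)

theorem ker_toHilbQuotient : LinearMap.ker (toHilbQuotient I k) =
    Submodule.comap (Rdeg n k).subtype ((mId n ^ (k + 1) ⊔ I).restrictScalars ℂ) := by
  ext φ
  simp only [toHilbQuotient, LinearMap.mem_ker, LinearMap.comp_apply, Submodule.mkQ_apply,
    Submodule.Quotient.mk_eq_zero]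
  rfl

theorem finrank_inf_Rdeg_add_hilbFn :
    Module.finrank ℂ ↥((mId n ^ (k + 1) ⊔ I).restrictScalars ℂ ⊓ Rdeg n k) + hilbFn n I k =
      Module.finrank ℂ (Rdeg n k) := by
  rw [← (toHilbQuotient I k).finrank_range_add_finrank_ker,
    LinearMap.range_eq_top.2 (toHilbQuotient_surjective I k), finrank_top, ker_toHilbQuotient,
    ← (Submodule.comapSubtypeEquivOfLe inf_le_right).finrank_eq, Submodule.comap_inf,
    Submodule.comap_subtype_self, inf_top_eq, add_comm]
  rfl

theorem pow_le_pow_succ_sup_of_hilbFn_eq_zero (h : hilbFn n I k = 0) :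
    mId n ^ k ≤ mId n ^ (k + 1) ⊔ I := by
  have hinf := finrank_inf_Rdeg_add_hilbFn I k
  rw [h, add_zero] at hinf
  have hle : Rdeg n k ≤ (mId n ^ (k + 1) ⊔ I).restrictScalars ℂ :=
    inf_eq_right.1 (Submodule.eq_of_le_of_finrank_eq inf_le_right hinf)
  exact pow_idealOfVars_le_of_homogeneousSubmodule_le hle

theorem pow_le_of_hilbFn_eq_zero {a N : ℕ} (hN : mId n ^ N ≤ I)
    (h : ∀ k, a ≤ k → hilbFn n I k = 0) : mId n ^ a ≤ I := by
  suffices ∀ j k, a ≤ k → N ≤ k + j → mId n ^ k ≤ I from this N a le_rfl (by omega)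
  intro j
  induction j with
  | zero => exact fun k _ hk => (Ideal.pow_le_pow_right hk).trans hN
  | succ j ih =>
    intro k hak hk
    exact (pow_le_pow_succ_sup_of_hilbFn_eq_zero I k (h k hak)).trans
      (sup_le (ih (k + 1) (by omega) (by omega)) le_rfl)

theorem le_pow_succ_of_hilbFn_eq_finrank (h : hilbFn n I k = Module.finrank ℂ (Rdeg n k))
    (hI : I ≤ mId n ^ k) : I ≤ mId n ^ (k + 1) := by
  have hinf := finrank_inf_Rdeg_add_hilbFn I k
  rw [h, Nat.add_eq_right, Submodule.finrank_eq_zero] at hinf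
  exact le_pow_idealOfVars_succ_of_inf_eq_bot hI hinf

end HilbertFunction

theorem hilbert_function_one_n_two_structure_general (n : ℕ) (I : Ideal (R n))
    (hprimary : ∃ N : ℕ, 1 ≤ N ∧ mId n ^ N ≤ I)
    (h0 : hilbFn n I 0 = 1) (h1 : hilbFn n I 1 = n) (h2 : hilbFn n I 2 = 2)
    (h3 : ∀ k : ℕ, 3 ≤ k → hilbFn n I k = 0) :
    mId n ^ 3 ≤ I ∧
    I ≤ mId n ^ 2 ∧
    I = Ideal.span ((I.restrictScalars ℂ ⊓ Rdeg n 2 : Submodule ℂ (R n)) : Set (R n))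
        ⊔ mId n ^ 3 ∧
    Module.finrank ℂ ↥(I.restrictScalars ℂ ⊓ Rdeg n 2) + 2 = Module.finrank ℂ ↥(Rdeg n 2) ∧
    (∀ f ∈ I, ∀ d : ℕ, homogeneousComponent d f ∈ I) := by
  obtain ⟨N, -, hN⟩ := hprimary
  have hm3 : mId n ^ 3 ≤ I := pow_le_of_hilbFn_eq_zero I hN h3
  have hI1 : I ≤ mId n ^ 1 := le_pow_succ_of_hilbFn_eq_finrank I 0
    (h0.trans finrank_homogeneousSubmodule_zero.symm) (by simp)
  have hI2 : I ≤ mId n ^ 2 := le_pow_succ_of_hilbFn_eq_finrank I 1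
    (by rw [h1, Rdeg, finrank_homogeneousSubmodule_one, Fintype.card_fin]) hI1
  have hcodim := finrank_inf_Rdeg_add_hilbFn I 2
  rw [h2, sup_eq_right.2 hm3] at hcodim
  exact ⟨hm3, hI2, eq_span_inf_homogeneousSubmodule_sup_of_le_pow_of_pow_succ_le hI2 hm3, hcodim,
    fun f hf => homogeneousComponent_mem_of_le_pow_of_pow_succ_le hI2 hm3 hf⟩

/-- Let `n ≥ 2` and let `I ⊆ R` be an `m`-primary ideal with Hilbert
function `h_{R/I} = (1, n, 2)`. Then `m³ ⊆ I ⊆ m²` and `I = W + m³` where `W = I ∩ R_2`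
is a ℂ-subspace of `R_2` of codimension 2; in particular `I` is homogeneous. -/
theorem hilbert_function_one_n_two_structure (n : ℕ) (hn : 2 ≤ n) (I : Ideal (R n))
    (hprimary : ∃ N : ℕ, 1 ≤ N ∧ mId n ^ N ≤ I)
    (h0 : hilbFn n I 0 = 1) (h1 : hilbFn n I 1 = n) (h2 : hilbFn n I 2 = 2)
    (h3 : ∀ k : ℕ, 3 ≤ k → hilbFn n I k = 0) :
    mId n ^ 3 ≤ I ∧
    I ≤ mId n ^ 2 ∧
    I = Ideal.span ((I.restrictScalars ℂ ⊓ Rdeg n 2 : Submodule ℂ (R n)) : Set (R n))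
        ⊔ mId n ^ 3 ∧
    Module.finrank ℂ ↥(I.restrictScalars ℂ ⊓ Rdeg n 2) + 2 = Module.finrank ℂ ↥(Rdeg n 2) ∧
    (∀ f ∈ I, ∀ d : ℕ, homogeneousComponent d f ∈ I) :=
  hilbert_function_one_n_two_structure_general n I hprimary h0 h1 h2 h3

end
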